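/- Let a, b ∈ F_q^* and (u,v) ∈ F_q² with (u,v) ≠ (0,0). Then the Hamming weight of the codeword c_{(u,v)} of C_{D_{(a,b)}} is (1/4)·q² if v ≠ b (including the case v = 0), and is (1/4)·q·(q − 1 − S(a,u)) if v = b. -/

import Mathlib

open scoped BigOperators

noncomputable section

namespace Paper

/-- The additive character value `(-1)^{Tr(x)}` as an integer, where `Tr` is the
trace from `F` to `F_2`. -/
def chi {F : Type*} [Field F] [Fintype F] [Algebra (ZMod 2) F] (x : F) : ℤ :=
  if Algebra.trace (ZMod 2) F x = 0 then 1 else -1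

/-- The exponential sum `S(a,b) = Σ_{x ∈ F_q^*} (-1)^{Tr(a x^{(q-1)/l^m} + b x)}`. -/
def Sab (l m : ℕ) {F : Type*} [Field F] [Fintype F] [Algebra (ZMod 2) F] (a b : F) : ℤ :=
  letI : Fintype Fˣ := Fintype.ofFinite Fˣ
  ∑ x : Fˣ, chi (a * (x : F) ^ ((Fintype.card F - 1) / l ^ m) + b * (x : F))

/-- The exponential sum `S(a) = Σ_{i=0}^{l^m-1} (-1)^{Tr(a α^i)}`. -/
def Sa (l m : ℕ) {F : Type*} [Field F] [Fintype F] [Algebra (ZMod 2) F] (α a : F) : ℤ :=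
  ∑ i ∈ Finset.range (l ^ m), chi (a * α ^ i)

/-- The defining set `D_{(a,b)} = {(x,y) ≠ (0,0) : Tr(a x^{(q-1)/l^m} + b y) = 0}`. -/
def Dset (l m : ℕ) {F : Type*} [Field F] [Fintype F] [Algebra (ZMod 2) F] (a b : F) :
    Set (F × F) :=
  {p | p ≠ 0 ∧
    Algebra.trace (ZMod 2) F (a * p.1 ^ ((Fintype.card F - 1) / l ^ m) + b * p.2) = 0}

/-- The `F_2`-linear map sending `(u,v) ∈ F_q²` to the codeword
`(Tr(u x + v y))_{(x,y) ∈ D_{(a,b)}}`; its range is the code `C_{D_{(a,b)}}`. -/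
def cmap (l m : ℕ) {F : Type*} [Field F] [Fintype F] [Algebra (ZMod 2) F] (a b : F) :
    (F × F) →ₗ[ZMod 2] (↥(Dset l m a b) → ZMod 2) :=
  LinearMap.pi fun d =>
    (Algebra.trace (ZMod 2) F).comp
      ((LinearMap.mulLeft (ZMod 2) (d : F × F).1).comp (LinearMap.fst (ZMod 2) F F) +
       (LinearMap.mulLeft (ZMod 2) (d : F × F).2).comp (LinearMap.snd (ZMod 2) F F))

/-- Hamming weight of a word indexed by `ι`. -/
def hwt {ι : Type*} (c : ι → ZMod 2) : ℕ := {i | c i ≠ 0}.ncard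

/-- Hamming weight of the codeword `c_{(u,v)}` of `C_{D_{(a,b)}}`. -/
def cwt (l m : ℕ) {F : Type*} [Field F] [Fintype F] [Algebra (ZMod 2) F] (a b u v : F) : ℕ :=
  {p : F × F | p ∈ Dset l m a b ∧ Algebra.trace (ZMod 2) F (u * p.1 + v * p.2) ≠ 0}.ncard

/-- The `r`-th generalized Hamming weight of a linear code `C ⊆ F_p^ι`:
the minimum support size of an `r`-dimensional subspace of `C`. -/
def GHW (p : ℕ) {ι : Type*} (C : Submodule (ZMod p) (ι → ZMod p)) (r : ℕ) : ℕ :=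
  sInf {n | ∃ V : Submodule (ZMod p) (ι → ZMod p), V ≤ C ∧
    Module.finrank (ZMod p) ↥V = r ∧ {i : ι | ∃ c ∈ V, c i ≠ 0}.ncard = n}

/-- The Hamming weight `wt(u^{(i)})` of the sub-vector
`u^{(i)} = (a_{l^{m-1}-i}, a_{2 l^{m-1}-i}, …, a_{(l-1) l^{m-1}-i})` of the coordinate
vector of `u` in the basis `{α, α², …, α^{φ(l^m)}}` (the basis `B`, indexed so that
`B j = α^{j+1}`). -/
def wtCoord (l m : ℕ) {F : Type*} [Field F] [Fintype F] [Algebra (ZMod 2) F]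
    (B : Module.Basis (Fin (Nat.totient (l ^ m))) (ZMod 2) F) (i : ℕ) (u : F) : ℕ :=
  {k : ℕ | k < l - 1 ∧ ∃ h : (k + 1) * l ^ (m - 1) - i - 1 < Nat.totient (l ^ m),
      B.repr u ⟨(k + 1) * l ^ (m - 1) - i - 1, h⟩ = 1}.ncard

/-- The exponential sum `B_{H_r} = Σ_{(x,y) ∈ F_q²} Σ_{β ∈ H_r}
(-1)^{Tr(β·(x,y) + a x^{(q-1)/l^m} + b y)}`. -/
def BH (l m : ℕ) {F : Type*} [Field F] [Fintype F] [Algebra (ZMod 2) F] (a b : F)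
    (H : Submodule (ZMod 2) (F × F)) : ℤ :=
  letI : Fintype ↥H := Fintype.ofFinite ↥H
  ∑ p : F × F, ∑ β : ↥H,
    chi ((β : F × F).1 * p.1 + (β : F × F).2 * p.2
      + a * p.1 ^ ((Fintype.card F - 1) / l ^ m) + b * p.2)

/-!
Count with characters: with `χ(x) = (-1)^{Tr x}`, the indicator of `Tr f = 0 ∧ Tr g ≠ 0` is
`(1 + χ(f))(1 - χ(g)) / 4`, where `f = a x^N + b y` and `g = u x + v y`. Expanding gives three
character sums over `F_q²`. A sum whose argument contains `c y` with `c ≠ 0` vanishes by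
orthogonality, which kills `Σ χ(f)` (as `b ≠ 0`), `Σ χ(g)`, and `Σ χ(f + g)` unless `v = b`.
When `v = b` (characteristic 2) the variable `y` drops out of `f + g`, and the sum is
`q (1 + S(a,u))`: the term `x = 0` contributes `1` because `N = (q - 1)/l^m ≠ 0`, as `l^m ∣ q - 1`.
-/

open scoped Finset

section Character

variable {F : Type*} [Field F] [Fintype F] [Algebra (ZMod 2) F]

lemma chi_zero : chi (0 : F) = 1 := by simp [chi]

lemma chi_add (s t : F) : chi (s + t) = chi s * chi t := by
  have key : ∀ x y : ZMod 2, (if x + y = 0 then (1 : ℤ) else -1) =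
      (if x = 0 then (1 : ℤ) else -1) * (if y = 0 then (1 : ℤ) else -1) := by decide
  unfold chi
  rw [map_add]
  exact key _ _

lemma sum_chi_mul_eq_zero {c : F} (hc : c ≠ 0) : ∑ y : F, chi (c * y) = 0 := by
  obtain ⟨y₀, hy₀⟩ := Algebra.trace_surjective (ZMod 2) F 1
  have hχy₀ : chi y₀ = -1 := by simp [chi, hy₀]
  have hshift : ∀ y : F, chi (c * (y + c⁻¹ * y₀)) = -chi (c * y) := by
    intro y
    rw [mul_add, mul_inv_cancel_left₀ hc, chi_add, hχy₀]
    ring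
  have := Fintype.sum_equiv (Equiv.addRight (c⁻¹ * y₀)) _ (fun y => chi (c * y)) fun _ => rfl
  simp only [Equiv.coe_addRight, hshift, Finset.sum_neg_distrib] at this
  linarith

lemma sum_chi_add_mul_snd_eq_zero (φ : F → F) {c : F} (hc : c ≠ 0) :
    ∑ p : F × F, chi (φ p.1 + c * p.2) = 0 := by
  simp only [Fintype.sum_prod_type, chi_add, ← Finset.mul_sum, sum_chi_mul_eq_zero hc,
    mul_zero, Finset.sum_const_zero]

lemma sum_chi_linear_eq_zero {u v : F} (huv : (u, v) ≠ (0, 0)) :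
    ∑ p : F × F, chi (u * p.1 + v * p.2) = 0 := by
  rcases eq_or_ne v 0 with rfl | hv
  · have hu : u ≠ 0 := fun hu => huv (by rw [hu])
    simp only [Fintype.sum_prod_type, zero_mul, add_zero, Finset.sum_const, Finset.card_univ,
      ← Finset.smul_sum, sum_chi_mul_eq_zero hu, smul_zero]
  · exact sum_chi_add_mul_snd_eq_zero _ hv

lemma sum_chi_fst (φ : F → F) :
    ∑ p : F × F, chi (φ p.1) = Fintype.card F * ∑ x : F, chi (φ x) := by
  simp only [Fintype.sum_prod_type, Finset.sum_const, Finset.card_univ, nsmul_eq_mul,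
    Finset.mul_sum]

lemma four_mul_card_filter {α : Type*} [Fintype α] (f g : α → F) :
    4 * (#{p | Algebra.trace (ZMod 2) F (f p) = 0 ∧ Algebra.trace (ZMod 2) F (g p) ≠ 0} : ℤ) =
      Fintype.card α + ∑ p, chi (f p) - ∑ p, chi (g p) - ∑ p, chi (f p + g p) := by
  have hpoint : ∀ p, (1 + chi (f p)) * (1 - chi (g p)) =
      if Algebra.trace (ZMod 2) F (f p) = 0 ∧ Algebra.trace (ZMod 2) F (g p) ≠ 0 then 4 else 0 := by
    intro p
    unfold chi
    split_ifs <;> simp_all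
  calc 4 * (#{p | Algebra.trace (ZMod 2) F (f p) = 0 ∧ Algebra.trace (ZMod 2) F (g p) ≠ 0} : ℤ)
      = ∑ p, (1 + chi (f p)) * (1 - chi (g p)) := by
        rw [Finset.sum_congr rfl fun p _ => hpoint p, Finset.sum_ite, Finset.sum_const,
          Finset.sum_const_zero, nsmul_eq_mul, mul_comm]
        simp
    _ = ∑ p, (1 + chi (f p) - chi (g p) - chi (f p + g p)) := by
        congr 1; ext p; rw [chi_add]; ring
    _ = _ := by
        simp only [Finset.sum_sub_distrib, Finset.sum_add_distrib, Finset.sum_const,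
          Finset.card_univ, nsmul_eq_mul, mul_one]

end Character

lemma cwt_eq_card_filter (l m : ℕ) {F : Type*} [Field F] [Fintype F] [Algebra (ZMod 2) F]
    (a b u v : F) :
    cwt l m a b u v = #{p : F × F |
      Algebra.trace (ZMod 2) F (a * p.1 ^ ((Fintype.card F - 1) / l ^ m) + b * p.2) = 0 ∧
      Algebra.trace (ZMod 2) F (u * p.1 + v * p.2) ≠ 0} := by
  rw [cwt, ← Set.ncard_coe_finset]
  congr 1
  ext p
  simp only [Dset, Finset.coe_filter, Finset.mem_univ, true_and, Set.mem_ofPred_eq]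
  constructor
  · rintro ⟨⟨-, hD⟩, hc⟩
    exact ⟨hD, hc⟩
  · rintro ⟨hD, hc⟩
    refine ⟨⟨?_, hD⟩, hc⟩
    rintro rfl
    simp at hc

lemma sum_chi_eq_one_add_Sab (l m : ℕ) {F : Type*} [Field F] [Fintype F] [Algebra (ZMod 2) F]
    (a u : F) (hN : (Fintype.card F - 1) / l ^ m ≠ 0) :
    ∑ x : F, chi (a * x ^ ((Fintype.card F - 1) / l ^ m) + u * x) = 1 + Sab l m a u := by
  classical
  rw [Fintype.sum_eq_add_sum_subtype_ne _ 0, zero_pow hN, mul_zero, mul_zero, add_zero,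
    chi_zero, Sab]
  let _ : Fintype Fˣ := Fintype.ofFinite Fˣ
  congr 1
  exact Fintype.sum_equiv unitsEquivNeZero.symm _ _ fun _ => rfl

lemma dvd_two_pow_sub_one_of_orderOf_eq {n k : ℕ} (h : orderOf (2 : ZMod n) = k) :
    n ∣ 2 ^ k - 1 := by
  rw [← ZMod.natCast_eq_zero_iff, Nat.cast_sub Nat.one_le_two_pow, ← h]
  simp [pow_orderOf_eq_one]

theorem stmt6_general (l m : ℕ)
    {F : Type*} [Field F] [Fintype F] [Algebra (ZMod 2) F]
    (hcard : Fintype.card F = 2 ^ Nat.totient (l ^ m))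
    (h2 : orderOf (2 : ZMod (l ^ m)) = Nat.totient (l ^ m))
    (a : F) (b : F) (hb : b ≠ 0) (u v : F) (huv : (u, v) ≠ (0, 0)) :
    (v ≠ b → (cwt l m a b u v : ℚ) = 1 / 4 * (Fintype.card F : ℚ) ^ 2) ∧
    (v = b →
      (cwt l m a b u v : ℚ) = 1 / 4 * (Fintype.card F : ℚ) * ((Fintype.card F : ℚ) - 1 - (Sab l m a u : ℚ))) := by
  set q := Fintype.card F
  set N := (q - 1) / l ^ m
  have hdvd : l ^ m ∣ q - 1 := hcard ▸ dvd_two_pow_sub_one_of_orderOf_eq h2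
  have hq : 0 < q - 1 := Nat.sub_pos_of_lt Fintype.one_lt_card
  have hN : N ≠ 0 :=
    (Nat.div_pos (Nat.le_of_dvd hq hdvd) (Nat.pos_of_dvd_of_pos hdvd hq)).ne'
  have hcount := four_mul_card_filter (fun p : F × F => a * p.1 ^ N + b * p.2)
    (fun p => u * p.1 + v * p.2)
  have hsum : ∀ p : F × F, a * p.1 ^ N + b * p.2 + (u * p.1 + v * p.2) =
      (a * p.1 ^ N + u * p.1) + (b + v) * p.2 := fun p => by ring
  simp only [hsum, sum_chi_add_mul_snd_eq_zero (fun x => a * x ^ N) hb,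
    sum_chi_linear_eq_zero huv, Fintype.card_prod, Nat.cast_mul] at hcount
  rw [← cwt_eq_card_filter] at hcount
  have : CharP F 2 := charP_of_injective_algebraMap (algebraMap (ZMod 2) F).injective 2
  refine ⟨fun hvb => ?_, fun hvb => ?_⟩
  · have hbv : b + v ≠ 0 := fun h => hvb (CharTwo.add_eq_zero.mp h).symm
    rw [sum_chi_add_mul_snd_eq_zero (fun x => a * x ^ N + u * x) hbv] at hcount
    have := congrArg (Int.cast : ℤ → ℚ) hcount
    push_cast at this
    linear_combination this / 4
  · subst v
    simp only [CharTwo.add_self_eq_zero, zero_mul, add_zero,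
      sum_chi_fst (fun x => a * x ^ N + u * x)] at hcount
    rw [sum_chi_eq_one_add_Sab l m a u hN] at hcount
    have := congrArg (Int.cast : ℤ → ℚ) hcount
    push_cast at this
    linear_combination this / 4

theorem stmt6 (l m : ℕ) (hl : l.Prime) (hm : 1 ≤ m)
    {F : Type*} [Field F] [Fintype F] [Algebra (ZMod 2) F]
    (hcard : Fintype.card F = 2 ^ Nat.totient (l ^ m))
    (h2 : orderOf (2 : ZMod (l ^ m)) = Nat.totient (l ^ m))
    (a : F) (ha : a ≠ 0) (b : F) (hb : b ≠ 0) (u v : F) (huv : (u, v) ≠ (0, 0)) :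
    (v ≠ b → (cwt l m a b u v : ℚ) = 1 / 4 * (Fintype.card F : ℚ) ^ 2) ∧
    (v = b →
      (cwt l m a b u v : ℚ) = 1 / 4 * (Fintype.card F : ℚ) * ((Fintype.card F : ℚ) - 1 - (Sab l m a u : ℚ))) :=
  stmt6_general l m hcard h2 a b hb u v huv

end Paper
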